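/- arXiv:2308.01665 — 2 statements merged into one kernel-verified Lean document; each statement's English description precedes it below -/
import Mathlib

section
/- The function φ : ℂ × ℝ → ℝ ∪ {∞} defined by φ(x, σ) = |x|²/(2σ) + σ/2 if σ > 0, φ(0,0) = 0, and φ(x, σ) = ∞ otherwise, is convex on ℂ × ℝ. -/
noncomputable def phi (x : ℂ) (σ : ℝ) : EReal :=
  if 0 < σ then ((‖x‖ ^ 2 / (2 * σ) + σ / 2 : ℝ) : EReal)
  else if x = 0 ∧ σ = 0 then 0 else ⊤

/-! `phi` is positively homogeneous of degree one and subadditive, hence convex. Subadditivity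
away from the degenerate points is the triangle inequality followed by Sedrakyan's inequality
`(a + b)² / (u + v) ≤ a² / u + b² / v`. -/

theorem norm_add_sq_div_add_le {E : Type*} [SeminormedAddGroup E] (x y : E) {σ₁ σ₂ : ℝ}
    (h₁ : 0 < σ₁) (h₂ : 0 < σ₂) :
    ‖x + y‖ ^ 2 / (σ₁ + σ₂) ≤ ‖x‖ ^ 2 / σ₁ + ‖y‖ ^ 2 / σ₂ :=
  calc ‖x + y‖ ^ 2 / (σ₁ + σ₂) ≤ (‖x‖ + ‖y‖) ^ 2 / (σ₁ + σ₂) := by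
        gcongr; exact norm_add_le x y
    _ ≤ ‖x‖ ^ 2 / σ₁ + ‖y‖ ^ 2 / σ₂ := by
        simpa [Fin.sum_univ_two] using
          Finset.sq_sum_div_le_sum_sq_div Finset.univ ![‖x‖, ‖y‖] (g := ![σ₁, σ₂])
            (by simp [Fin.forall_fin_two, h₁, h₂])

theorem phi_of_pos (x : ℂ) {σ : ℝ} (hσ : 0 < σ) :
    phi x σ = ((‖x‖ ^ 2 / (2 * σ) + σ / 2 : ℝ) : EReal) :=
  if_pos hσ

theorem phi_zero_zero : phi 0 0 = 0 := by
  simp [phi]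

theorem phi_ne_bot (x : ℂ) (σ : ℝ) : phi x σ ≠ ⊥ := by
  unfold phi
  split_ifs <;> simp

theorem phi_ne_top_iff {x : ℂ} {σ : ℝ} : phi x σ ≠ ⊤ ↔ 0 < σ ∨ (x = 0 ∧ σ = 0) := by
  unfold phi
  split_ifs with hσ
  · exact iff_of_true (EReal.coe_ne_top _) (.inl hσ)
  all_goals simp_all

theorem phi_smul {c : ℝ} (hc : 0 < c) (x : ℂ) (σ : ℝ) :
    phi (c • x) (c * σ) = (c : EReal) * phi x σ := by
  by_cases hσ : 0 < σ
  · rw [phi_of_pos _ (mul_pos hc hσ), phi_of_pos _ hσ, ← EReal.coe_mul, EReal.coe_eq_coe_iff,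
      norm_smul, Real.norm_of_nonneg hc.le]
    field_simp
  · simp [phi, hσ, hc, hc.ne', EReal.coe_mul_top_of_pos hc]

theorem phi_add_le (x₁ x₂ : ℂ) (σ₁ σ₂ : ℝ) :
    phi (x₁ + x₂) (σ₁ + σ₂) ≤ phi x₁ σ₁ + phi x₂ σ₂ := by
  by_cases htop₁ : phi x₁ σ₁ = ⊤
  · rw [htop₁, EReal.top_add_of_ne_bot (phi_ne_bot _ _)]
    exact le_top
  by_cases htop₂ : phi x₂ σ₂ = ⊤
  · rw [htop₂, EReal.add_top_of_ne_bot (phi_ne_bot _ _)]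
    exact le_top
  rcases phi_ne_top_iff.1 htop₁ with h₁ | ⟨rfl, rfl⟩
  · rcases phi_ne_top_iff.1 htop₂ with h₂ | ⟨rfl, rfl⟩
    · rw [phi_of_pos _ (add_pos h₁ h₂), phi_of_pos _ h₁, phi_of_pos _ h₂, ← EReal.coe_add,
        EReal.coe_le_coe_iff]
      simp only [mul_comm (2 : ℝ), ← div_div]
      linarith [norm_add_sq_div_add_le x₁ x₂ h₁ h₂]
    · simp [phi_zero_zero]
  · simp [phi_zero_zero]

theorem phi_convex :
    ∀ (x₁ x₂ : ℂ) (σ₁ σ₂ : ℝ) (t : ℝ), 0 ≤ t → t ≤ 1 →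
      phi (t • x₁ + (1 - t) • x₂) (t * σ₁ + (1 - t) * σ₂) ≤
        (t : EReal) * phi x₁ σ₁ + ((1 - t : ℝ) : EReal) * phi x₂ σ₂ := by
  intro x₁ x₂ σ₁ σ₂ t ht₀ ht₁
  rcases ht₀.eq_or_lt with rfl | ht₀
  · simp
  rcases ht₁.eq_or_lt with rfl | ht₁
  · simp
  calc phi (t • x₁ + (1 - t) • x₂) (t * σ₁ + (1 - t) * σ₂)
      ≤ phi (t • x₁) (t * σ₁) + phi ((1 - t) • x₂) ((1 - t) * σ₂) := phi_add_le ..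
    _ = (t : EReal) * phi x₁ σ₁ + ((1 - t : ℝ) : EReal) * phi x₂ σ₂ := by
      rw [phi_smul ht₀, phi_smul (sub_pos.2 ht₁)]
end

section
/- Let τ > 0, σ ∈ ℝ, and x ∈ ℂ with x ≠ 0. Then the cubic equation s³ + ((2/τ)σ + 1)s − (2/τ)|x| = 0 has exactly one positive real root. -/
/-!
The map `f s = s ^ 3 + c * s` is continuous with `f 0 = 0` and `f s → ∞`, so it takes every
value `d > 0` at some `s > 0`. If `f s = f t = d > 0` with `s, t > 0`, then
`f t - f s = (t - s) (t ^ 2 + t s + s ^ 2 + c)`, and the second factor is positive because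
`s ^ 2 + c = d / s > 0`; hence `s = t`.
-/

namespace Real

theorem exists_pos_cube_add_mul_eq (c : ℝ) {d : ℝ} (hd : 0 < d) :
    ∃ s : ℝ, 0 < s ∧ s ^ 3 + c * s = d := by
  set M : ℝ := 1 + |c| + d
  have hM : 1 ≤ M := by linarith [abs_nonneg c]
  have hdM : d ≤ M ^ 3 + c * M := by
    nlinarith [neg_abs_le c, abs_nonneg c, mul_le_mul_of_nonneg_left hM (by linarith : 0 ≤ M)]
  have hcont : ContinuousOn (fun s : ℝ => s ^ 3 + c * s) (Set.Icc 0 M) := by fun_prop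
  obtain ⟨s, ⟨hs0, -⟩, hs⟩ :=
    intermediate_value_Icc (by linarith) hcont ⟨by simpa using hd.le, hdM⟩
  refine ⟨s, hs0.lt_of_ne ?_, hs⟩
  rintro rfl
  exact hd.ne (by simpa using hs)

theorem eq_of_cube_add_mul_eq {c s t : ℝ} (hs : 0 < s) (ht : 0 < t)
    (hpos : 0 < s ^ 3 + c * s) (h : t ^ 3 + c * t = s ^ 3 + c * s) : t = s := by
  have hsc : 0 < s ^ 2 + c := pos_of_mul_pos_right (by linear_combination hpos) hs.le
  have hfactor : 0 < t ^ 2 + t * s + s ^ 2 + c := by nlinarith [mul_pos ht hs]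
  have hprod : (t - s) * (t ^ 2 + t * s + s ^ 2 + c) = 0 := by linear_combination h
  linarith [(mul_eq_zero.mp hprod).resolve_right hfactor.ne']

theorem existsUnique_pos_cube_add_mul_eq (c : ℝ) {d : ℝ} (hd : 0 < d) :
    ∃! s : ℝ, 0 < s ∧ s ^ 3 + c * s = d := by
  obtain ⟨s, hs, hsd⟩ := exists_pos_cube_add_mul_eq c hd
  refine ⟨s, ⟨hs, hsd⟩, fun t ⟨ht, htd⟩ => ?_⟩
  exact eq_of_cube_add_mul_eq hs ht (hsd ▸ hd) (htd.trans hsd.symm)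

end Real

theorem unique_positive_root (τ σ : ℝ) (hτ : 0 < τ) (x : ℂ) (hx : x ≠ 0) :
    ∃! s : ℝ, 0 < s ∧
      s ^ 3 + ((2 / τ) * σ + 1) * s - (2 / τ) * ‖x‖ = 0 := by
  have hd : 0 < (2 / τ) * ‖x‖ := mul_pos (div_pos two_pos hτ) (norm_pos_iff.mpr hx)
  simpa only [sub_eq_zero] using Real.existsUnique_pos_cube_add_mul_eq ((2 / τ) * σ + 1) hd
end
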